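/- Let X and Y be Hilbert spaces, T : X → Y a bounded linear operator with a least-squares projection approximation {(X_n, T_n)}. Then the LPA has kernel approximability if and only if it has bounded-weak convergence: whenever a sequence {y_n} ⊆ Y satisfies sup_n ‖T_n† y_n‖ < +∞ and y_n ⇀ y weakly, then y ∈ D(T†) and T_n† y_n ⇀ T† y weakly. -/

import Mathlib

/-!
(⇒) Let `xₙ = Tₙ† yₙ`, bounded by `C`. Since `xₙ ⊥ N(T) ∩ Xₙ`, `|⟪xₙ, v⟫| ≤ C · dist(v, N(T) ∩ Xₙ)`,
which tends to `0` for `v ∈ N(T)` by kernel approximability. Since `T(Xₙ) ⊆ R(T)`, the projections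
onto `T(Xₙ)` converge strongly to the projection `P` onto `cl R(T)`, so
`⟪xₙ, T* z⟫ = ⟪yₙ, P_{T(Xₙ)} z⟫ → ⟪P y, z⟫`. As `N(T) + R(T*)` is dense and `(xₙ)` is bounded,
`xₙ` converges weakly to some `x₀ ⊥ N(T)` with `T x₀ = P y`; hence `y ∈ D(T†)` and `x₀ = T† y`.

(⇐) For `x ∈ N(T)`, `zₙ := Tₙ†(Tₙ x) = x - P_{N(Tₙ)} x` has norm at most `‖x‖` and `Tₙ x → 0`,
so `zₙ ⇀ T† 0 = 0`; as `‖zₙ‖² = ⟪zₙ, x⟫`, even `zₙ → 0`. The point `P_{Xₙ} P_{N(Tₙ)} x` lies in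
`N(T) ∩ Xₙ` and is within `‖x - P_{Xₙ} x‖ + ‖zₙ‖` of `x`.
-/

open Filter Topology Metric Submodule ContinuousLinearMap
open scoped RealInnerProductSpace

/-- Orthogonal projection onto a subspace `K` (as an operator `H →L[ℝ] H`),
defined whenever `K` admits orthogonal projections (e.g. `K` closed). -/
noncomputable def orthProj {H : Type*} [NormedAddCommGroup H] [InnerProductSpace ℝ H]
    (K : Submodule ℝ H) : H →L[ℝ] H :=
  open scoped Classical in
  if h : HasOrthogonalProjection K then
    haveI := h
    K.subtypeL.comp (orthogonalProjection K)
  else 0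

section InnerProductSpace

variable {E F : Type*} [NormedAddCommGroup E] [InnerProductSpace ℝ E]
  [NormedAddCommGroup F] [InnerProductSpace ℝ F]

theorem orthProj_eq_starProjection (K : Submodule ℝ E) [h : K.HasOrthogonalProjection] :
    orthProj K = K.starProjection := by
  rw [orthProj, dif_pos h]
  rfl

theorem abs_inner_le_norm_mul_infDist {K : Submodule ℝ E} {x : E} (hx : x ∈ Kᗮ) (v : E) :
    |⟪x, v⟫| ≤ ‖x‖ * infDist v K := by
  have : Nonempty K := ⟨0⟩
  rw [infDist_eq_iInf, Real.mul_iInf_of_nonneg (norm_nonneg x)]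
  refine le_ciInf fun w => ?_
  calc |⟪x, v⟫| = |⟪x, v - w⟫| := by
        rw [inner_sub_right, (mem_orthogonal' K x).1 hx w w.2, sub_zero]
    _ ≤ ‖x‖ * dist v w := by rw [dist_eq_norm]; exact abs_real_inner_le_norm x _

theorem eq_of_mem_orthogonal_ker_of_apply_eq (S : E →L[ℝ] F) {a b : E} (ha : a ∈ S.kerᗮ)
    (hb : b ∈ S.kerᗮ) (hab : S a = S b) : a = b := by
  rw [← sub_eq_zero, ← mem_bot ℝ, ← S.ker.inf_orthogonal_eq_bot]
  exact ⟨by simp [hab], sub_mem ha hb⟩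

theorem exists_norm_le_of_tendsto_inner [CompleteSpace E] {y : ℕ → E} {y₀ : E}
    (hy : ∀ v, Tendsto (fun n => ⟪y n, v⟫) atTop (𝓝 ⟪y₀, v⟫)) : ∃ B, ∀ n, ‖y n‖ ≤ B := by
  obtain ⟨B, hB⟩ := banach_steinhaus (g := fun n => innerSL ℝ (y n)) fun v => by
    obtain ⟨M, hM⟩ := (hy v).norm.bddAbove_range
    exact ⟨M, fun n => hM (Set.mem_range_self n)⟩
  exact ⟨B, fun n => (innerSL_apply_norm ℝ (y n)).symm.trans_le (hB n)⟩

theorem tendsto_inner_of_weak_of_tendsto [CompleteSpace E] {y w : ℕ → E} {y₀ w₀ : E}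
    (hy : ∀ v, Tendsto (fun n => ⟪y n, v⟫) atTop (𝓝 ⟪y₀, v⟫)) (hw : Tendsto w atTop (𝓝 w₀)) :
    Tendsto (fun n => ⟪y n, w n⟫) atTop (𝓝 ⟪y₀, w₀⟫) := by
  obtain ⟨B, hB⟩ := exists_norm_le_of_tendsto_inner hy
  have hsmall : Tendsto (fun n => ⟪y n, w n - w₀⟫) atTop (𝓝 0) := by
    refine squeeze_zero_norm (fun n => (norm_inner_le_norm _ _).trans
      (mul_le_mul_of_nonneg_right (hB n) (norm_nonneg _))) ?_
    simpa using ((tendsto_iff_norm_sub_tendsto_zero.1 hw).const_mul B)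
  simpa [inner_sub_right] using hsmall.add (hy w₀)

theorem isClosed_setOf_cauchySeq_inner {x : ℕ → E} {C : ℝ} (hC : ∀ n, ‖x n‖ ≤ C) :
    IsClosed {v | CauchySeq fun n => ⟪x n, v⟫} := by
  -- Cauchy-ness at `v` is convergence to `0` of the equicontinuous family `⟪x m - x n, ·⟫`.
  let f : ℕ × ℕ → E →L[ℝ] ℝ := fun p => innerSL ℝ (x p.1 - x p.2)
  have hbound : ∃ C, ∀ p, ‖f p‖ ≤ C := ⟨C + C, fun p => by
    rw [innerSL_apply_norm]; exact (norm_sub_le _ _).trans (add_le_add (hC _) (hC _))⟩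
  have hf : Equicontinuous ((↑) ∘ f) := ((NormedSpace.equicontinuous_TFAE f).out 5 1).1 hbound
  convert Equicontinuous.isClosed_setOfPred_tendsto hf (l := atTop) (f := fun _ => (0 : ℝ))
    continuous_const using 1
  ext v
  rw [Set.mem_ofPred_eq, Set.mem_ofPred_eq, cauchySeq_iff_tendsto_dist_atTop_0]
  simp only [f, Real.dist_eq, Function.comp_apply, innerSL_apply_apply, inner_sub_left]
  exact (tendsto_zero_iff_abs_tendsto_zero _).symm

theorem exists_tendsto_inner_of_dense [CompleteSpace E] {x : ℕ → E} {C : ℝ} (hC : ∀ n, ‖x n‖ ≤ C)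
    {s : Set E} (hs : Dense s) (h : ∀ u ∈ s, ∃ L, Tendsto (fun n => ⟪x n, u⟫) atTop (𝓝 L)) :
    ∃ x₀ : E, ∀ v, Tendsto (fun n => ⟪x n, v⟫) atTop (𝓝 ⟪x₀, v⟫) := by
  have hcauchy : ∀ v, CauchySeq fun n => ⟪x n, v⟫ := fun v =>
    (isClosed_setOf_cauchySeq_inner hC).closure_subset_iff.2
      (fun u hu => (h u hu).elim fun _ hL => hL.cauchySeq) (hs v)
  choose L hL using fun v => cauchySeq_tendsto_of_complete (hcauchy v)
  let φ : E →L[ℝ] ℝ := continuousLinearMapOfTendsto (fun n => innerSL ℝ (x n))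
    (tendsto_pi_nhds.2 hL)
  refine ⟨(InnerProductSpace.toDual ℝ E).symm φ, fun v => ?_⟩
  rw [InnerProductSpace.toDual_symm_apply]
  exact hL v

theorem norm_sub_starProjection_le (K : Submodule ℝ E) [K.HasOrthogonalProjection] (v : E)
    {w : E} (hw : w ∈ K) : ‖v - K.starProjection v‖ ≤ ‖v - w‖ :=
  (starProjection_minimal v).trans_le
    (ciInf_le ⟨0, Set.forall_mem_range.2 fun _ => norm_nonneg _⟩ (⟨w, hw⟩ : K))

theorem tendsto_starProjection_topologicalClosure [CompleteSpace E] {K : ℕ → Submodule ℝ E}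
    [∀ n, (K n).HasOrthogonalProjection] {M : Submodule ℝ E} (hKM : ∀ n, K n ≤ M)
    (happrox : ∀ m ∈ M, ∃ k : ℕ → E, (∀ n, k n ∈ K n) ∧ Tendsto k atTop (𝓝 m)) (z : E) :
    Tendsto (fun n => (K n).starProjection z) atTop
      (𝓝 (M.topologicalClosure.starProjection z)) := by
  have hbound : ∃ C, ∀ n, ‖(K n).starProjection‖ ≤ C := ⟨1, fun n => starProjection_norm_le (K n)⟩
  have hequi : Equicontinuous fun n => ⇑(K n).starProjection :=
    ((NormedSpace.equicontinuous_TFAE fun n => (K n).starProjection).out 5 1).1 hbound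
  have hM : ∀ m ∈ M, Tendsto (fun n => (K n).starProjection m) atTop (𝓝 m) := by
    intro m hm
    obtain ⟨k, hkK, hk⟩ := happrox m hm
    rw [tendsto_iff_norm_sub_tendsto_zero] at hk ⊢
    refine squeeze_zero_norm (fun n => ?_) hk
    rw [norm_norm, norm_sub_rev]
    exact (norm_sub_starProjection_le _ m (hkK n)).trans_eq (norm_sub_rev _ _)
  have hclosure : ∀ w ∈ M.topologicalClosure,
      Tendsto (fun n => (K n).starProjection w) atTop (𝓝 w) :=
    (Equicontinuous.isClosed_setOfPred_tendsto hequi continuous_id).closure_subset_iff.2 hM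
  have hproj : ∀ n, (K n).starProjection z
      = (K n).starProjection (M.topologicalClosure.starProjection z) := fun n => by
    rw [← ContinuousLinearMap.comp_apply, starProjection_comp_starProjection_of_le
      ((hKM n).trans M.le_topologicalClosure)]
  simpa only [hproj] using hclosure _ (starProjection_apply_mem _ z)

theorem dense_ker_sup_range_adjoint [CompleteSpace E] [CompleteSpace F] (T : E →L[ℝ] F) :
    Dense ((T.ker ⊔ (adjoint T).range : Submodule ℝ E) : Set E) := by
  rw [Submodule.dense_iff_topologicalClosure_eq_top, topologicalClosure_eq_top_iff,
    ← inf_orthogonal, orthogonal_range, adjoint_adjoint, inf_comm, inf_orthogonal_eq_bot]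

theorem eq_sub_starProjection_ker [CompleteSpace E] (S : E →L[ℝ] F) {a x : E}
    (ha : a ∈ S.kerᗮ) (hSa : S a = S x) : a = x - S.ker.starProjection x := by
  refine eq_of_mem_orthogonal_ker_of_apply_eq S ha (sub_starProjection_mem_orthogonal x) ?_
  have hker : S (S.ker.starProjection x) = 0 := starProjection_apply_mem S.ker x
  rw [map_sub, hker, sub_zero, hSa]

theorem inner_sub_starProjection_self (K : Submodule ℝ E) [K.HasOrthogonalProjection] (x : E) :
    ⟪x - K.starProjection x, x⟫ = ‖x - K.starProjection x‖ ^ 2 := by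
  rw [← real_inner_self_eq_norm_sq, ← add_zero ⟪_, x - _⟫,
    ← starProjection_inner_eq_zero x _ (starProjection_apply_mem K x), ← inner_add_right,
    sub_add_cancel]

theorem mem_sup_orthogonal_of_starProjection_mem [CompleteSpace E] {M : Submodule ℝ E} {y : E}
    (hy : M.topologicalClosure.starProjection y ∈ M) : y ∈ M ⊔ Mᗮ := by
  refine mem_sup.2 ⟨_, hy, y - M.topologicalClosure.starProjection y, ?_, add_sub_cancel _ _⟩
  exact orthogonal_le M.le_topologicalClosure (sub_starProjection_mem_orthogonal y)

end InnerProductSpace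

theorem mem_of_tendsto_infDist {α : Type*} [PseudoMetricSpace α] {s : Set α} (hs : IsClosed s)
    {t : ℕ → Set α} (hts : ∀ n, t n ⊆ s) (ht : ∀ n, (t n).Nonempty) {x : α}
    (hx : Tendsto (fun n => infDist x (t n)) atTop (𝓝 0)) : x ∈ s := by
  have h0 : infDist x s = 0 :=
    le_antisymm (ge_of_tendsto hx (Eventually.of_forall fun n =>
      infDist_le_infDist_of_subset (hts n) (ht n))) infDist_nonneg
  rw [← hs.closure_eq, mem_closure_iff_infDist_zero ((ht 0).mono (hts 0))]
  exact h0

section LeastSquaresProjection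

variable {X Y : Type*} [NormedAddCommGroup X] [InnerProductSpace ℝ X]
  [NormedAddCommGroup Y] [InnerProductSpace ℝ Y] (T : X →L[ℝ] Y)

theorem orthogonal_ker_comp_starProjection_le (K : Submodule ℝ X) [K.HasOrthogonalProjection] :
    (T ∘L K.starProjection).kerᗮ ≤ K := by
  refine (orthogonal_orthogonal K).le.trans' (orthogonal_le fun w hw => ?_)
  simp [(starProjection_apply_eq_zero_iff K).2 hw]

theorem ker_inf_le_ker_comp_starProjection (K : Submodule ℝ X) [K.HasOrthogonalProjection] :
    T.ker ⊓ K ≤ (T ∘L K.starProjection).ker := fun w ⟨hwT, hwK⟩ => by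
  simpa [starProjection_eq_self_iff.2 hwK] using hwT

theorem infDist_ker_inf_le [CompleteSpace X] (K : Submodule ℝ X) [K.HasOrthogonalProjection]
    (x : X) :
    infDist x (T.ker ⊓ K : Submodule ℝ X)
      ≤ ‖x - K.starProjection x‖ + ‖x - (T ∘L K.starProjection).ker.starProjection x‖ := by
  set u := (T ∘L K.starProjection).ker.starProjection x
  have hu : K.starProjection u ∈ T.ker ⊓ K :=
    ⟨starProjection_apply_mem (T ∘L K.starProjection).ker x, starProjection_apply_mem K u⟩
  calc infDist x (T.ker ⊓ K : Submodule ℝ X) ≤ ‖x - K.starProjection u‖ :=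
        (infDist_le_dist_of_mem hu).trans_eq (dist_eq_norm _ _)
    _ = ‖(x - K.starProjection x) + K.starProjection (x - u)‖ := by rw [map_sub]; abel_nf
    _ ≤ ‖x - K.starProjection x‖ + ‖x - u‖ :=
        (norm_add_le _ _).trans (by gcongr; exact norm_starProjection_apply_le K _)

variable {Xn : ℕ → Submodule ℝ X} [∀ n, FiniteDimensional ℝ (Xn n)]

theorem tendsto_starProjection_map [CompleteSpace Y]
    (hproj : ∀ x, Tendsto (fun n => (Xn n).starProjection x) atTop (𝓝 x)) (z : Y) :
    Tendsto (fun n => ((Xn n).map (T : X →ₗ[ℝ] Y)).starProjection z) atTop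
      (𝓝 (T.range.topologicalClosure.starProjection z)) :=
  tendsto_starProjection_topologicalClosure (fun _ => LinearMap.map_le_range)
    (fun _ hm => (LinearMap.mem_range.1 hm).elim fun u hu => ⟨fun n => T ((Xn n).starProjection u),
      fun _ => mem_map_of_mem (starProjection_apply_mem _ u),
      hu ▸ (T.continuous.tendsto u).comp (hproj u)⟩) z

theorem exists_tendsto_inner_of_tendsto_infDist [CompleteSpace X] [CompleteSpace Y]
    (hproj : ∀ x, Tendsto (fun n => (Xn n).starProjection x) atTop (𝓝 x))
    (hker : ∀ v ∈ T.ker, Tendsto (fun n => infDist v (T.ker ⊓ Xn n : Submodule ℝ X)) atTop (𝓝 0))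
    {x : ℕ → X} {C : ℝ} (hC : ∀ n, ‖x n‖ ≤ C) (hx : ∀ n, x n ∈ (T ∘L (Xn n).starProjection).kerᗮ)
    {y : ℕ → Y} {y₀ : Y} (hy : ∀ v, Tendsto (fun n => ⟪y n, v⟫) atTop (𝓝 ⟪y₀, v⟫))
    (hTx : ∀ n, (T ∘L (Xn n).starProjection) (x n)
      = ((Xn n).map (T : X →ₗ[ℝ] Y)).starProjection (y n)) :
    ∃ x₀ ∈ T.kerᗮ, T x₀ = T.range.topologicalClosure.starProjection y₀ ∧
      ∀ v, Tendsto (fun n => ⟪x n, v⟫) atTop (𝓝 ⟪x₀, v⟫) := by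
  have hTx' : ∀ n, T (x n) = ((Xn n).map (T : X →ₗ[ℝ] Y)).starProjection (y n) := fun n => by
    rw [← hTx n, comp_apply,
      starProjection_eq_self_iff.2 (orthogonal_ker_comp_starProjection_le T (Xn n) (hx n))]
  have hker0 : ∀ v ∈ T.ker, Tendsto (fun n => ⟪x n, v⟫) atTop (𝓝 0) := fun v hv =>
    squeeze_zero_norm (fun n => (abs_inner_le_norm_mul_infDist
      (orthogonal_le (ker_inf_le_ker_comp_starProjection T (Xn n)) (hx n)) v).trans
        (mul_le_mul_of_nonneg_right (hC n) infDist_nonneg))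
      (by simpa using (hker v hv).const_mul C)
  have hadj : ∀ z, Tendsto (fun n => ⟪x n, adjoint T z⟫) atTop
      (𝓝 ⟪T.range.topologicalClosure.starProjection y₀, z⟫) := fun z => by
    simp only [adjoint_inner_right, hTx', inner_starProjection_left_eq_right]
    exact tendsto_inner_of_weak_of_tendsto hy (tendsto_starProjection_map T hproj z)
  obtain ⟨x₀, hx₀⟩ := exists_tendsto_inner_of_dense hC (dense_ker_sup_range_adjoint T)
    fun u hu => by
      obtain ⟨a, ha, _, ⟨z, rfl⟩, rfl⟩ := mem_sup.1 hu
      exact ⟨_, by simpa only [inner_add_right, coe_coe] using (hker0 a ha).add (hadj z)⟩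
  refine ⟨x₀, (mem_orthogonal' _ _).2 fun v hv => tendsto_nhds_unique (hx₀ v) (hker0 v hv),
    ext_inner_right ℝ fun z => ?_, hx₀⟩
  rw [← adjoint_inner_right]
  exact tendsto_nhds_unique (hx₀ _) (hadj z)

theorem eq_sub_starProjection_ker_comp [CompleteSpace X] (K : Submodule ℝ X)
    [FiniteDimensional ℝ K] {a x : X} (ha : a ∈ (T ∘L K.starProjection).kerᗮ)
    (hTa : (T ∘L K.starProjection) a
      = (K.map (T : X →ₗ[ℝ] Y)).starProjection ((T ∘L K.starProjection) x)) :
    a = x - (T ∘L K.starProjection).ker.starProjection x :=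
  eq_sub_starProjection_ker _ ha (hTa.trans (starProjection_eq_self_iff.2
    (mem_map_of_mem (starProjection_apply_mem K x))))

theorem tendsto_infDist_ker_inf [CompleteSpace X]
    (hproj : ∀ x, Tendsto (fun n => (Xn n).starProjection x) atTop (𝓝 x)) {x : X}
    (hweak : ∀ v, Tendsto (fun n => ⟪x - (T ∘L (Xn n).starProjection).ker.starProjection x, v⟫)
      atTop (𝓝 0)) :
    Tendsto (fun n => infDist x (T.ker ⊓ Xn n : Submodule ℝ X)) atTop (𝓝 0) := by
  have hker : Tendsto (fun n => ‖x - (T ∘L (Xn n).starProjection).ker.starProjection x‖) atTop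
      (𝓝 0) := by
    have h := (hweak x).sqrt
    simp only [inner_sub_starProjection_self, Real.sqrt_sq_eq_abs, abs_norm, Real.sqrt_zero] at h
    exact h
  have hXn : Tendsto (fun n => ‖x - (Xn n).starProjection x‖) atTop (𝓝 0) := by
    simpa [norm_sub_rev] using tendsto_iff_norm_sub_tendsto_zero.1 (hproj x)
  exact squeeze_zero (fun n => infDist_nonneg) (fun n => infDist_ker_inf_le T (Xn n) x)
    (by simpa only [add_zero] using hXn.add hker)

end LeastSquaresProjection

variable {X Y : Type*} [NormedAddCommGroup X] [InnerProductSpace ℝ X] [CompleteSpace X]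
  [NormedAddCommGroup Y] [InnerProductSpace ℝ Y] [CompleteSpace Y]

theorem stmt1_general
    (T : X →L[ℝ] Y) (Xn : ℕ → Submodule ℝ X)
    (hfin : ∀ n, FiniteDimensional ℝ (Xn n))
    (hproj : ∀ x : X, Tendsto (fun n => orthProj (Xn n) x) atTop (𝓝 x))
    (Tn : ℕ → X →L[ℝ] Y) (hTn : ∀ n, Tn n = T.comp (orthProj (Xn n)))
    (Tdag : Y → X)
    (hTdag : ∀ y ∈ (LinearMap.range (T : X →ₗ[ℝ] Y) ⊔ (LinearMap.range (T : X →ₗ[ℝ] Y))ᗮ : Submodule ℝ Y),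
      Tdag y ∈ (LinearMap.ker (T : X →ₗ[ℝ] Y))ᗮ ∧
        T (Tdag y) = orthProj (LinearMap.range (T : X →ₗ[ℝ] Y)).topologicalClosure y)
    (Tdagn : ℕ → Y → X)
    (hTdagn : ∀ n (y : Y), Tdagn n y ∈ (LinearMap.ker (Tn n : X →ₗ[ℝ] Y))ᗮ ∧
      (Tn n) (Tdagn n y) = orthProj ((Xn n).map (T : X →ₗ[ℝ] Y)) y) :
    (∀ x : X, x ∈ LinearMap.ker (T : X →ₗ[ℝ] Y) ↔
      Tendsto (fun n => Metric.infDist x ((LinearMap.ker (T : X →ₗ[ℝ] Y) ⊓ Xn n : Submodule ℝ X) : Set X))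
        atTop (𝓝 0))
    ↔
    (∀ (y : ℕ → Y) (ylim : Y),
      (∃ C : ℝ, ∀ n, ‖Tdagn n (y n)‖ ≤ C) →
      (∀ v : Y, Tendsto (fun n => (inner ℝ (y n) v : ℝ)) atTop (𝓝 (inner ℝ ylim v))) →
      ylim ∈ (LinearMap.range (T : X →ₗ[ℝ] Y) ⊔ (LinearMap.range (T : X →ₗ[ℝ] Y))ᗮ : Submodule ℝ Y) ∧
        ∀ v : X, Tendsto (fun n => (inner ℝ (Tdagn n (y n)) v : ℝ)) atTop
          (𝓝 (inner ℝ (Tdag ylim) v))) := by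
  have := hfin
  obtain rfl : Tn = fun n => T ∘L (Xn n).starProjection :=
    funext fun n => by rw [hTn n, orthProj_eq_starProjection]
  simp only [orthProj_eq_starProjection] at hproj hTdag hTdagn
  constructor
  · intro hker y y₀ ⟨C, hC⟩ hy
    obtain ⟨x₀, hx₀, hTx₀, hlim⟩ := exists_tendsto_inner_of_tendsto_infDist T hproj
      (fun v => (hker v).1) hC (fun n => (hTdagn n (y n)).1) hy (fun n => (hTdagn n (y n)).2)
    have hy₀ := mem_sup_orthogonal_of_starProjection_mem (hTx₀ ▸ LinearMap.mem_range_self _ x₀)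
    obtain ⟨hdag, hTdag₀⟩ := hTdag y₀ hy₀
    refine ⟨hy₀, ?_⟩
    rwa [← eq_of_mem_orthogonal_ker_of_apply_eq T hx₀ hdag (hTx₀.trans hTdag₀.symm)]
  · intro hbw x
    refine ⟨fun hx => tendsto_infDist_ker_inf T hproj fun v => ?_,
      mem_of_tendsto_infDist T.isClosed_ker (fun _ => SetLike.coe_mono inf_le_left)
        (fun _ => ⟨0, zero_mem _⟩)⟩
    have hdag : ∀ n, Tdagn n ((T ∘L (Xn n).starProjection) x)
        = x - (T ∘L (Xn n).starProjection).ker.starProjection x := fun n =>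
      eq_sub_starProjection_ker_comp T (Xn n) (hTdagn n _).1 (hTdagn n _).2
    have hTdag0 : Tdag 0 = 0 := eq_of_mem_orthogonal_ker_of_apply_eq T
      (hTdag 0 (zero_mem _)).1 (zero_mem _) (by simp [(hTdag 0 (zero_mem _)).2])
    have hTx : Tendsto (fun n => (T ∘L (Xn n).starProjection) x) atTop (𝓝 0) := by
      simpa [Function.comp_def, show T x = 0 from hx] using (T.continuous.tendsto x).comp (hproj x)
    obtain ⟨-, hweak⟩ := hbw (fun n => (T ∘L (Xn n).starProjection) x) 0
      ⟨‖x‖, fun n => (hdag n).symm ▸ (norm_sub_starProjection_le _ x (zero_mem _)).trans_eq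
        (congrArg norm (sub_zero x))⟩
      (fun v => by simpa using hTx.inner tendsto_const_nhds)
    simpa only [hdag, hTdag0, inner_zero_left] using hweak v

/-- Kernel approximability is equivalent to bounded-weak convergence. -/
theorem stmt1
    (T : X →L[ℝ] Y) (Xn : ℕ → Submodule ℝ X)
    (hfin : ∀ n, FiniteDimensional ℝ (Xn n))
    (hinf : ¬ FiniteDimensional ℝ X)
    (hproj : ∀ x : X, Tendsto (fun n => orthProj (Xn n) x) atTop (𝓝 x))
    (Tn : ℕ → X →L[ℝ] Y) (hTn : ∀ n, Tn n = T.comp (orthProj (Xn n)))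
    (Tdag : Y → X)
    (hTdag : ∀ y ∈ (LinearMap.range (T : X →ₗ[ℝ] Y) ⊔ (LinearMap.range (T : X →ₗ[ℝ] Y))ᗮ : Submodule ℝ Y),
      Tdag y ∈ (LinearMap.ker (T : X →ₗ[ℝ] Y))ᗮ ∧
        T (Tdag y) = orthProj (LinearMap.range (T : X →ₗ[ℝ] Y)).topologicalClosure y)
    (Tdagn : ℕ → Y → X)
    (hTdagn : ∀ n (y : Y), Tdagn n y ∈ (LinearMap.ker (Tn n : X →ₗ[ℝ] Y))ᗮ ∧
      (Tn n) (Tdagn n y) = orthProj ((Xn n).map (T : X →ₗ[ℝ] Y)) y) :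
    (∀ x : X, x ∈ LinearMap.ker (T : X →ₗ[ℝ] Y) ↔
      Tendsto (fun n => Metric.infDist x ((LinearMap.ker (T : X →ₗ[ℝ] Y) ⊓ Xn n : Submodule ℝ X) : Set X))
        atTop (𝓝 0))
    ↔
    (∀ (y : ℕ → Y) (ylim : Y),
      (∃ C : ℝ, ∀ n, ‖Tdagn n (y n)‖ ≤ C) →
      (∀ v : Y, Tendsto (fun n => (inner ℝ (y n) v : ℝ)) atTop (𝓝 (inner ℝ ylim v))) →
      ylim ∈ (LinearMap.range (T : X →ₗ[ℝ] Y) ⊔ (LinearMap.range (T : X →ₗ[ℝ] Y))ᗮ : Submodule ℝ Y) ∧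
        ∀ v : X, Tendsto (fun n => (inner ℝ (Tdagn n (y n)) v : ℝ)) atTop
          (𝓝 (inner ℝ (Tdag ylim) v))) :=
  stmt1_general T Xn hfin hproj Tn hTn Tdag hTdag Tdagn hTdagn
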